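/- arXiv:2405.18512 — 7 statements merged into one kernel-verified Lean document; each statement's English description precedes it below -/
import Mathlib

section
/- There exist coefficients a_1, …, a_{m'} ∈ [0,1] such that for the embedding η(v) = (sin(2π a_1 v), cos(2π a_1 v), …, sin(2π a_{m'} v), cos(2π a_{m'} v)) ∈ ℝ^{2m'}, every pair of distinct u, v ∈ {1,…,n} satisfies |⟨η(u), η(v)⟩| ≤ 2√(m' log n). -/
open Real

/-- The sinusoidal embedding `η(v) = (sin(2π a_1 v), cos(2π a_1 v), …,
sin(2π a_{m'} v), cos(2π a_{m'} v)) ∈ ℝ^{2m'}`, realized as an element of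
`EuclideanSpace ℝ (Fin m' × Fin 2)`. -/
noncomputable def sinCosEmbed (m' : ℕ) (a : Fin m' → ℝ) (v : ℤ) :
    EuclideanSpace ℝ (Fin m' × Fin 2) :=
  WithLp.toLp 2 (fun p => if p.2 = 0 then Real.sin (2 * Real.pi * a p.1 * (v : ℝ))
           else Real.cos (2 * Real.pi * a p.1 * (v : ℝ)))

/-!
Draw `a_1, …, a_{m'}` independently and uniformly from `[0,1]`. For an integer `k ≠ 0` the
variables `cos (2π a_i k)` are centred and take values in `[-1, 1]`, so by Hoeffding the sum
`∑ i, cos (2π a_i k)`, which is `⟨η(u), η(v)⟩` for `k = u - v`, has absolute value at least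
`t = 2√(m' log n)` with probability at most `2 exp (-t² / 2m') = 2 / n²`. A union bound over the
`n - 1` values of `|u - v|` leaves a positive probability for a good choice of the `a_i`.
-/

open MeasureTheory ProbabilityTheory Finset
open scoped unitInterval

lemma inner_sinCosEmbed (m : ℕ) (a : Fin m → ℝ) (u v : ℤ) :
    inner ℝ (sinCosEmbed m a u) (sinCosEmbed m a v) = ∑ i, cos (2 * π * a i * (u - v : ℤ)) := by
  simp only [sinCosEmbed, PiLp.inner_apply, Fintype.sum_prod_type, Fin.sum_univ_two,
    RCLike.inner_apply, conj_trivial]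
  refine sum_congr rfl fun i _ => ?_
  simp only [Fin.isValue, ↓reduceIte, one_ne_zero, Int.cast_sub, mul_sub, cos_sub]
  ring

lemma integral_cos_two_pi_mul_int_unitInterval {k : ℤ} (hk : k ≠ 0) :
    ∫ x : I, cos (2 * π * x * k) = 0 := by
  have hc : 2 * π * k ≠ 0 := by positivity
  simp_rw [show ∀ x : ℝ, 2 * π * x * k = 2 * π * k * x from fun x => by ring]
  rw [unitInterval.volume_def,
    integral_subtype_comap (s := I) measurableSet_Icc (fun x : ℝ => cos (2 * π * k * x)),
    integral_Icc_eq_integral_Ioc, ← intervalIntegral.integral_of_le zero_le_one]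
  have hsin : sin (2 * π * k) = 0 := by
    rw [show 2 * π * (k : ℝ) = (2 * k : ℤ) * π by push_cast; ring, sin_int_mul_pi]
  rw [intervalIntegral.integral_comp_mul_left cos hc, integral_cos, mul_one, mul_zero, hsin,
    sin_zero, sub_zero, smul_zero]

lemma hasSubgaussianMGF_cos_two_pi_mul_int {k : ℤ} (hk : k ≠ 0) :
    HasSubgaussianMGF (fun x : I => cos (2 * π * x * k)) 1 volume := by
  have h := hasSubgaussianMGF_of_mem_Icc_of_integral_eq_zero (a := -1) (b := 1)
    (by fun_prop) (ae_of_all _ fun x => ⟨neg_one_le_cos _, cos_le_one _⟩)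
    (integral_cos_two_pi_mul_int_unitInterval hk)
  convert h
  ext
  norm_num

lemma hasSubgaussianMGF_sum_cos_two_pi_mul_int (m : ℕ) {k : ℤ} (hk : k ≠ 0) :
    HasSubgaussianMGF (fun a : Fin m → I => ∑ i, cos (2 * π * a i * k)) m volume := by
  have hX : ∀ i, HasSubgaussianMGF (fun a : Fin m → I => cos (2 * π * a i * k)) 1 volume :=
    fun i => .of_map (μ := volume) (X := fun x : I => cos (2 * π * x * k))
      (measurable_pi_apply i).aemeasurable <| by
      rw [volume_pi, (measurePreserving_eval _ i).map_eq]
      exact hasSubgaussianMGF_cos_two_pi_mul_int hk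
  have hindep := iIndepFun_pi (μ := fun _ : Fin m => (volume : Measure I))
    (X := fun _ x => cos (2 * π * x * k)) fun _ => by fun_prop
  have h := HasSubgaussianMGF.sum_of_iIndepFun hindep (s := univ) fun i _ => hX i
  rwa [sum_const, card_univ, Fintype.card_fin, nsmul_one] at h

lemma ProbabilityTheory.HasSubgaussianMGF.measureReal_abs_ge_le {Ω : Type*} [MeasurableSpace Ω]
    {μ : Measure Ω} {X : Ω → ℝ} {c : NNReal} (h : HasSubgaussianMGF X c μ) {ε : ℝ} (hε : 0 ≤ ε) :
    μ.real {ω | ε ≤ |X ω|} ≤ 2 * exp (-ε ^ 2 / (2 * c)) := by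
  have : IsFiniteMeasure μ := by simpa [integrable_const_iff] using h.integrable_exp_mul 0
  calc μ.real {ω | ε ≤ |X ω|} ≤ μ.real ({ω | ε ≤ X ω} ∪ {ω | ε ≤ (-X) ω}) :=
        measureReal_mono fun ω (hω : ε ≤ |X ω|) => le_abs.1 hω
    _ ≤ μ.real {ω | ε ≤ X ω} + μ.real {ω | ε ≤ (-X) ω} := measureReal_union_le _ _
    _ ≤ 2 * exp (-ε ^ 2 / (2 * c)) := by
        linarith [h.measure_ge_le hε, h.neg.measure_ge_le hε]

lemma exists_forall_notMem_of_sum_measureReal_lt_one {Ω ι : Type*} [MeasurableSpace Ω]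
    (μ : Measure Ω) [IsProbabilityMeasure μ] (K : Finset ι) (s : ι → Set Ω)
    (h : ∑ k ∈ K, μ.real (s k) < 1) : ∃ ω, ∀ k ∈ K, ω ∉ s k := by
  by_contra! hcover
  have huniv : Set.univ ⊆ ⋃ k ∈ K, s k := fun ω _ => by simpa using hcover ω
  have hle :=
    (measureReal_mono huniv (measure_ne_top μ _)).trans (measureReal_biUnion_finset_le K s)
  rw [probReal_univ] at hle
  linarith

lemma exists_forall_abs_sum_cos_lt (m : ℕ) (K : Finset ℤ) (hK : 0 ∉ K) {t : ℝ} (ht : 0 ≤ t)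
    (hsmall : #K * (2 * exp (-t ^ 2 / (2 * m))) < 1) :
    ∃ a : Fin m → I, ∀ k ∈ K, |∑ i, cos (2 * π * a i * k)| < t := by
  obtain ⟨a, ha⟩ := exists_forall_notMem_of_sum_measureReal_lt_one (volume : Measure (Fin m → I))
    K (fun k => {a | t ≤ |∑ i, cos (2 * π * a i * k)|}) <| by
    calc _ ≤ ∑ k ∈ K, 2 * exp (-t ^ 2 / (2 * m)) := sum_le_sum fun k hk =>
            (hasSubgaussianMGF_sum_cos_two_pi_mul_int m
              (ne_of_mem_of_not_mem hk hK)).measureReal_abs_ge_le ht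
      _ < 1 := by rwa [sum_const, nsmul_eq_mul]
  exact ⟨a, fun k hk => not_le.1 (ha k hk)⟩

/-- There exist coefficients `a_1, …, a_{m'} ∈ [0,1]` such that for the sinusoidal
embedding `η`, every pair of distinct `u, v ∈ {1,…,n}` satisfies
`|⟨η(u), η(v)⟩| ≤ 2√(m' log n)`. -/
theorem exists_near_orthogonal_embedding (n m' : ℕ) (hn : 0 < n) (hm : 0 < m') :
    ∃ a : Fin m' → ℝ, (∀ j, a j ∈ Set.Icc (0:ℝ) 1) ∧
      ∀ u v : ℤ, u ∈ Set.Icc (1:ℤ) (n:ℤ) → v ∈ Set.Icc (1:ℤ) (n:ℤ) → u ≠ v →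
        |(inner ℝ (sinCosEmbed m' a u) (sinCosEmbed m' a v) : ℝ)| ≤
          2 * Real.sqrt ((m' : ℝ) * Real.log n) := by
  have hn' : (1 : ℝ) ≤ n := by exact_mod_cast hn
  have hlog : 0 ≤ log n := log_nonneg hn'
  have hexp : exp (-(2 * √(m' * log n)) ^ 2 / (2 * m')) = ((n : ℝ) ^ 2)⁻¹ := by
    rw [mul_pow, sq_sqrt (by positivity), ← exp_log (by positivity : (0 : ℝ) < n ^ 2), ← exp_neg,
      log_pow]
    congr 1
    field_simp
    ring
  have hcard : (#(Ioo (0 : ℤ) n) : ℝ) = n - 1 := by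
    have : #(Ioo (0 : ℤ) n) = n - 1 := by simp only [Int.card_Ioo]; omega
    rw [this, Nat.cast_sub hn, Nat.cast_one]
  obtain ⟨a, ha⟩ := exists_forall_abs_sum_cos_lt m' (Ioo 0 n) (by simp)
      (t := 2 * √(m' * log n)) (by positivity) <| by
    rw [hcard, hexp]
    field_simp
    nlinarith
  refine ⟨fun j => a j, fun j => (a j).2, fun u v ⟨hu1, hun⟩ ⟨hv1, hvn⟩ huv => ?_⟩
  have heven : ∀ (x : ℝ) (k : ℤ), cos (x * |k|) = cos (x * k) := fun x k => by
    rcases abs_choice k with h | h <;> simp [h]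
  rw [inner_sinCosEmbed]
  simp only [← heven _ (u - v)]
  exact (ha |u - v| (by simp only [mem_Ioo, abs_pos, sub_ne_zero, abs_lt]; omega)).le
end

section
/- Under the same hypotheses, for pairwise distinct u, v, v' one has |⟨ξ(u,v), ξ(u,v')⟩ − m'| ≤ 4χ + 4χ²/m'. -/
/-!
With `a = ⟪η u, η v⟫`, `b = ⟪η u, η v'⟫`, `c = ⟪η v, η v'⟫`, the shared vector `η u` makes
`⟪ξ(u,v), ξ(u,v')⟫ - m' = m' (m' c - a b) / ((m' + a)(m' + b))`. The numerator is at most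
`m' (m' χ + χ²)` in absolute value, and `χ ≤ m'/4` keeps both factors of the denominator
above `m'/2`.
-/

open scoped RealInnerProductSpace

theorem real_inner_smul_add_smul_add {E : Type*} [NormedAddCommGroup E] [InnerProductSpace ℝ E]
    (α β : ℝ) (x y z : E) :
    ⟪α • (x + y), β • (x + z)⟫ = α * β * (‖x‖ ^ 2 + ⟪x, y⟫ + ⟪x, z⟫ + ⟪y, z⟫) := by
  rw [real_inner_smul_left, real_inner_smul_right, inner_add_left, inner_add_right,
    inner_add_right, real_inner_self_eq_norm_sq, real_inner_comm y x]
  ring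

theorem abs_mul_sub_mul_le {m χ a b c : ℝ} (hm : 0 ≤ m)
    (ha : |a| ≤ χ) (hb : |b| ≤ χ) (hc : |c| ≤ χ) :
    |m * c - a * b| ≤ m * χ + χ ^ 2 := by
  have hχ : 0 ≤ χ := (abs_nonneg a).trans ha
  calc |m * c - a * b| ≤ |m * c| + |a * b| := abs_sub _ _
    _ = m * |c| + |a| * |b| := by rw [abs_mul, abs_mul, abs_of_nonneg hm]
    _ ≤ m * χ + χ * χ := by gcongr
    _ = m * χ + χ ^ 2 := by ring

theorem abs_div_mul_div_mul_sub_le {m χ a b c : ℝ} (hm : 0 < m) (hχ : χ ≤ m / 4)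
    (ha : |a| ≤ χ) (hb : |b| ≤ χ) (hc : |c| ≤ χ) :
    |m / (m + a) * (m / (m + b)) * (m + a + b + c) - m| ≤ 4 * χ + 4 * χ ^ 2 / m := by
  have hma : m / 2 ≤ m + a := by linarith [neg_abs_le a]
  have hmb : m / 2 ≤ m + b := by linarith [neg_abs_le b]
  have hden : m ^ 2 / 4 ≤ (m + a) * (m + b) := by
    calc m ^ 2 / 4 = m / 2 * (m / 2) := by ring
      _ ≤ (m + a) * (m + b) := mul_le_mul hma hmb (by positivity) (by linarith)
  have hden_pos : 0 < (m + a) * (m + b) := lt_of_lt_of_le (by positivity) hden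
  have hcancel : m / (m + a) * (m / (m + b)) * (m + a + b + c) - m
      = m * (m * c - a * b) / ((m + a) * (m + b)) := by
    have hma0 : m + a ≠ 0 := by linarith
    have hmb0 : m + b ≠ 0 := by linarith
    field_simp
    ring
  rw [hcancel, abs_div, abs_mul, abs_of_pos hm, abs_of_pos hden_pos]
  have hnum : m * |m * c - a * b| ≤ m * (m * χ + χ ^ 2) := by
    gcongr
    exact abs_mul_sub_mul_le hm.le ha hb hc
  calc m * |m * c - a * b| / ((m + a) * (m + b))
      ≤ m * (m * χ + χ ^ 2) / (m ^ 2 / 4) :=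
        div_le_div₀ ((mul_nonneg hm.le (abs_nonneg _)).trans hnum) hnum (by positivity) hden
    _ = 4 * χ + 4 * χ ^ 2 / m := by field_simp

/-- Under the hypotheses `‖η(v)‖² = m'` and `|⟨η(u),η(v)⟩| ≤ χ ≤ m'/4` for
distinct vertices, for pairwise distinct `u, v, v'` one has
`|⟨ξ(u,v), ξ(u,v')⟩ − m'| ≤ 4χ + 4χ²/m'`. -/
theorem abs_inner_xi_xi_shared_sub_le {V : Type*} {E : Type*}
    [NormedAddCommGroup E] [InnerProductSpace ℝ E]
    (m' χ : ℝ) (hm : 0 < m') (hχ : χ ≤ m' / 4)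
    (η : V → E) (hnorm : ∀ v, ‖η v‖ ^ 2 = m')
    (hcross : ∀ u v : V, u ≠ v → |(inner ℝ (η u) (η v) : ℝ)| ≤ χ)
    (ξ : V → V → E)
    (hξ : ∀ u v : V, u ≠ v →
      ξ u v = (m' / (m' + (inner ℝ (η u) (η v) : ℝ))) • (η u + η v))
    (u v v' : V) (h1 : u ≠ v) (h2 : u ≠ v') (h3 : v ≠ v') :
    |(inner ℝ (ξ u v) (ξ u v') : ℝ) - m'| ≤ 4 * χ + 4 * χ ^ 2 / m' := by
  rw [hξ u v h1, hξ u v' h2, real_inner_smul_add_smul_add, hnorm u]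
  exact abs_div_mul_div_mul_sub_le hm hχ (hcross u v h1) (hcross u v' h2) (hcross v v' h3)
end

section
/- Under the same hypotheses, for pairwise distinct u, v, u', v' one has |⟨ξ(u,v), ξ(u',v')⟩| ≤ 4m'²χ/(m' − χ)² ≤ 16χ. -/
/-!
Expanding the inner product, `⟪ξ(u,v), ξ(u',v')⟫` is the product of the two normalising factors
`m'/(m' + ⟪η u, η v⟫)` and `m'/(m' + ⟪η u', η v'⟫)` with a sum of four cross inner products of
distinct vertices. Each factor is at most `m'/(m' − χ)` and the sum is at most `4χ` in absolute
value; finally `m'/(m' − χ) ≤ 2` as soon as `2χ ≤ m'`.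
-/

open RealInnerProductSpace

theorem abs_inner_add_add_le {E : Type*} [NormedAddCommGroup E] [InnerProductSpace ℝ E]
    {x y z w : E} {χ : ℝ} (hxz : |⟪x, z⟫| ≤ χ) (hxw : |⟪x, w⟫| ≤ χ) (hyz : |⟪y, z⟫| ≤ χ)
    (hyw : |⟪y, w⟫| ≤ χ) :
    |⟪x + y, z + w⟫| ≤ 4 * χ := by
  rw [inner_add_left, inner_add_right, inner_add_right]
  calc |⟪x, z⟫ + ⟪x, w⟫ + (⟪y, z⟫ + ⟪y, w⟫)|
      ≤ |⟪x, z⟫| + |⟪x, w⟫| + (|⟪y, z⟫| + |⟪y, w⟫|) :=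
        (abs_add_le _ _).trans (add_le_add (abs_add_le _ _) (abs_add_le _ _))
    _ ≤ 4 * χ := by linarith

theorem abs_div_add_le_div_sub {m χ a : ℝ} (hm : 0 ≤ m) (hχm : χ < m) (ha : |a| ≤ χ) :
    |m / (m + a)| ≤ m / (m - χ) := by
  have hsub : m - χ ≤ m + a := by linarith [neg_abs_le a]
  rw [abs_of_nonneg (div_nonneg hm (by linarith))]
  exact div_le_div_of_nonneg_left hm (by linarith) hsub

theorem four_mul_sq_mul_div_sub_sq_le {m χ : ℝ} (hχ : 0 ≤ χ) (hχm : 2 * χ ≤ m) :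
    4 * m ^ 2 * χ / (m - χ) ^ 2 ≤ 16 * χ := by
  rcases hχ.eq_or_lt with rfl | hχpos
  · simp
  rw [div_le_iff₀ (by nlinarith)]
  nlinarith [mul_le_mul_of_nonneg_left hχm hχpos.le]

theorem abs_inner_xi_xi_disjoint_le_general {V : Type*} {E : Type*}
    [NormedAddCommGroup E] [InnerProductSpace ℝ E]
    (m' χ : ℝ) (hm : 0 < m') (hχ : χ ≤ m' / 4)
    (η : V → E)
    (hcross : ∀ u v : V, u ≠ v → |(inner ℝ (η u) (η v) : ℝ)| ≤ χ)
    (ξ : V → V → E)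
    (hξ : ∀ u v : V, u ≠ v →
      ξ u v = (m' / (m' + (inner ℝ (η u) (η v) : ℝ))) • (η u + η v))
    (u v u' v' : V) (h1 : u ≠ v) (h2 : u' ≠ v') (h3 : u ≠ u') (h4 : u ≠ v')
    (h5 : v ≠ u') (h6 : v ≠ v') :
    |(inner ℝ (ξ u v) (ξ u' v') : ℝ)| ≤ 4 * m' ^ 2 * χ / (m' - χ) ^ 2 ∧
      4 * m' ^ 2 * χ / (m' - χ) ^ 2 ≤ 16 * χ := by
  have hχ0 : 0 ≤ χ := (abs_nonneg _).trans (hcross u v h1)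
  have hχm : χ < m' := by linarith
  have hfactor : m' / (m' - χ) * (m' / (m' - χ)) * (4 * χ) = 4 * m' ^ 2 * χ / (m' - χ) ^ 2 := by
    field_simp
  refine ⟨?_, four_mul_sq_mul_div_sub_sq_le hχ0 (by linarith)⟩
  rw [hξ u v h1, hξ u' v' h2, real_inner_smul_left, real_inner_smul_right, ← mul_assoc,
    abs_mul, abs_mul, ← hfactor]
  have hM : 0 ≤ m' / (m' - χ) := div_nonneg hm.le (by linarith)
  gcongr
  · exact abs_div_add_le_div_sub hm.le hχm (hcross u v h1)
  · exact abs_div_add_le_div_sub hm.le hχm (hcross u' v' h2)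
  · exact abs_inner_add_add_le (hcross u u' h3) (hcross u v' h4) (hcross v u' h5) (hcross v v' h6)

/-- Under the hypotheses `‖η(v)‖² = m'` and `|⟨η(u),η(v)⟩| ≤ χ ≤ m'/4` for
distinct vertices, for pairwise distinct `u, v, u', v'` one has
`|⟨ξ(u,v), ξ(u',v')⟩| ≤ 4m'²χ/(m' − χ)² ≤ 16χ`. -/
theorem abs_inner_xi_xi_disjoint_le {V : Type*} {E : Type*}
    [NormedAddCommGroup E] [InnerProductSpace ℝ E]
    (m' χ : ℝ) (hm : 0 < m') (hχ : χ ≤ m' / 4)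
    (η : V → E) (hnorm : ∀ v, ‖η v‖ ^ 2 = m')
    (hcross : ∀ u v : V, u ≠ v → |(inner ℝ (η u) (η v) : ℝ)| ≤ χ)
    (ξ : V → V → E)
    (hξ : ∀ u v : V, u ≠ v →
      ξ u v = (m' / (m' + (inner ℝ (η u) (η v) : ℝ))) • (η u + η v))
    (u v u' v' : V) (h1 : u ≠ v) (h2 : u' ≠ v') (h3 : u ≠ u') (h4 : u ≠ v')
    (h5 : v ≠ u') (h6 : v ≠ v') :
    |(inner ℝ (ξ u v) (ξ u' v') : ℝ)| ≤ 4 * m' ^ 2 * χ / (m' - χ) ^ 2 ∧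
      4 * m' ^ 2 * χ / (m' - χ) ^ 2 ≤ 16 * χ :=
  abs_inner_xi_xi_disjoint_le_general m' χ hm hχ η hcross ξ hξ u v u' v' h1 h2 h3 h4 h5 h6
end

section
/- Let s > 0 and let p₁, …, p_n be packets with a function b : {p_i} → ℤ and a function b' : {p_i} → ℤ such that for all i, |b(p_i) − b(p₁)| ≤ 1 + (1/(2s))·(z(p_i) − z(p₁)) where z(p_i) − z(p₁) = z'(p_i) − z'(p₁), b(p) = ⌊z(p)/(2s)⌋, b'(p) = ⌊z'(p)/(2s)⌋, and b'(p_i) = b'(p₁) for all i. Then the set {b(p_i) : i ∈ [n]} has at most 3 elements. -/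
/-- Packets with two score functions `z, z'` satisfying intra-class distance
preservation `z(p_i) − z(p_j) = z'(p_i) − z'(p_j)`, with floor-bucket
assignments `b(p) = ⌊z(p)/(2s)⌋` and `b'(p) = ⌊z'(p)/(2s)⌋`, where
`|b(p_i) − b(p₁)| ≤ 1 + (1/(2s))(z(p_i) − z(p₁))` and all packets share the
same `b'`-bucket. Then the set of `b`-buckets has at most 3 elements. -/
theorem bucket_image_card_le_three (n : ℕ) (s : ℝ) (hs : 0 < s)
    (z z' : Fin (n + 1) → ℝ)
    (hdiff : ∀ i j, z i - z j = z' i - z' j)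
    (b b' : Fin (n + 1) → ℤ)
    (hb : ∀ i, b i = ⌊z i / (2 * s)⌋)
    (hb' : ∀ i, b' i = ⌊z' i / (2 * s)⌋)
    (hineq : ∀ i, |(b i : ℝ) - (b 0 : ℝ)| ≤ 1 + (1 / (2 * s)) * (z i - z 0))
    (hsame : ∀ i, b' i = b' 0) :
    (Finset.univ.image b).card ≤ 3 := by
  have h2s : (0:ℝ) < 2 * s := by linarith
  have key : ∀ i, |b i - b 0| ≤ 1 := by
    intro i
    -- z' i - z' 0 < 2s
    have hfl : ⌊z' i / (2 * s)⌋ = ⌊z' 0 / (2 * s)⌋ := by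
      have := hsame i; rw [hb' i, hb' 0] at this; exact this
    have h1 : z' i / (2 * s) < ⌊z' 0 / (2 * s)⌋ + 1 := by
      rw [← hfl]; exact Int.lt_floor_add_one _
    have h2 : (⌊z' 0 / (2 * s)⌋ : ℝ) ≤ z' 0 / (2 * s) := Int.floor_le _
    have hlt : z' i - z' 0 < 2 * s := by
      have : z' i / (2 * s) - z' 0 / (2 * s) < 1 := by linarith
      rw [div_sub_div_same] at this
      calc z' i - z' 0 = (z' i - z' 0) / (2 * s) * (2 * s) := by
            field_simp
        _ < 1 * (2 * s) := by exact mul_lt_mul_of_pos_right this h2s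
        _ = 2 * s := one_mul _
    have hz : z i - z 0 < 2 * s := by rw [hdiff i 0]; exact hlt
    have h3 : |(b i : ℝ) - (b 0 : ℝ)| < 2 := by
      have := hineq i
      have : |(b i : ℝ) - (b 0 : ℝ)| ≤ 1 + (1 / (2 * s)) * (z i - z 0) := this
      have hmul : (1 / (2 * s)) * (z i - z 0) < 1 := by
        rw [div_mul_eq_mul_div, one_mul, div_lt_one h2s]; exact hz
      linarith
    have : |(b i : ℝ) - (b 0 : ℝ)| = |((b i - b 0 : ℤ) : ℝ)| := by push_cast; ring_nf
    rw [this, ← Int.cast_abs] at h3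
    exact_mod_cast Int.lt_add_one_iff.mp (by exact_mod_cast h3)
  have hsub : Finset.univ.image b ⊆ {b 0 - 1, b 0, b 0 + 1} := by
    intro x hx
    simp only [Finset.mem_image] at hx
    obtain ⟨i, _, rfl⟩ := hx
    have := key i
    rw [abs_le] at this
    simp only [Finset.mem_insert, Finset.mem_singleton]
    omega
  calc (Finset.univ.image b).card ≤ ({b 0 - 1, b 0, b 0 + 1} : Finset ℤ).card :=
        Finset.card_le_card hsub
    _ ≤ 3 := by
        apply le_trans (Finset.card_insert_le _ _)
        apply Nat.succ_le_succ
        exact le_trans (Finset.card_insert_le _ _) (by simp)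
end

section
/- Let r ≥ 1 and suppose a, b ∈ {0,1}^r. Construct the graph G(a,b) on 3r+2 vertices with source 1, sink 3r+2, fixed edges from 1 to each of {2,…,r+1} and from 3r+2 to each of {2r+2,…,3r+1}, edges {i+1, i+r+1} for each i with a_i = 1, and edges {i+r+1, i+2r+1} for each i with b_i = 1. Then vertices 1 and 3r+2 are connected in G(a,b) if and only if there exists i ∈ [r] with a_i = b_i = 1 (i.e., DISJ(a,b) = 1). Moreover, whenever they are connected, they are joined by a path of length 4. -/
/-- The edge relation of the constant-diameter disjointness graph `G(a,b)` on
vertex set `{1,…,3r+2}` (vertices are natural numbers): fixed star edges from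
the source `1` to `{2,…,r+1}` and from the sink `3r+2` to `{2r+2,…,3r+1}`,
Alice edges `{i+1, i+r+1}` when `a_i = 1` and Bob edges `{i+r+1, i+2r+1}` when
`b_i = 1` (here `i : Fin r` is zero-indexed, so `i+1` becomes `i+2`, etc.). -/
def disjRel (r : ℕ) (a b : Fin r → Bool) (x y : ℕ) : Prop :=
  (∃ i : Fin r, x = 1 ∧ y = (i : ℕ) + 2) ∨
  (∃ i : Fin r, x = 3 * r + 2 ∧ y = (i : ℕ) + 2 * r + 2) ∨
  (∃ i : Fin r, a i = true ∧ x = (i : ℕ) + 2 ∧ y = (i : ℕ) + r + 2) ∨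
  (∃ i : Fin r, b i = true ∧ x = (i : ℕ) + r + 2 ∧ y = (i : ℕ) + 2 * r + 2)

/-- The constant-diameter disjointness graph `G(a,b)`. -/
def disjGraph (r : ℕ) (a b : Fin r → Bool) : SimpleGraph ℕ :=
  SimpleGraph.fromRel (disjRel r a b)

/-- The set of vertices reachable from the source when `a` and `b` are disjoint. -/
def disjS (r : ℕ) (a : Fin r → Bool) (x : ℕ) : Prop :=
  x = 1 ∨ (∃ i : Fin r, x = (i : ℕ) + 2) ∨ (∃ i : Fin r, a i = true ∧ x = (i : ℕ) + r + 2)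

lemma disjS_closed (r : ℕ) (a b : Fin r → Bool)
    (hdisj : ¬ ∃ i, a i = true ∧ b i = true) {x y : ℕ}
    (hadj : (disjGraph r a b).Adj x y) (hx : disjS r a x) : disjS r a y := by
  rw [disjGraph, SimpleGraph.fromRel_adj] at hadj
  obtain ⟨hne, h | h⟩ := hadj
  · rcases h with ⟨i, hx1, hy⟩ | ⟨i, hx1, hy⟩ | ⟨i, hai, hx1, hy⟩ | ⟨i, hbi, hx1, hy⟩
    · exact Or.inr (Or.inl ⟨i, hy⟩)
    · exfalso
      rcases hx with h1 | ⟨j, hj⟩ | ⟨j, _, hj⟩ <;>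
        [skip; exact absurd (hj ▸ hx1) (by have := j.isLt; omega);
         exact absurd (hj ▸ hx1) (by have := j.isLt; omega)]
      omega
    · exact Or.inr (Or.inr ⟨i, hai, hy⟩)
    · exfalso
      rcases hx with h1 | ⟨j, hj⟩ | ⟨j, haj, hj⟩
      · omega
      · rw [hj] at hx1; have := j.isLt; have := i.isLt; omega
      · rw [hj] at hx1
        have hji : (j : ℕ) = (i : ℕ) := by omega
        exact hdisj ⟨i, by rwa [← Fin.ext hji], hbi⟩
  · rcases h with ⟨i, hy1, hx1⟩ | ⟨i, hy1, hx1⟩ | ⟨i, hai, hy1, hx1⟩ | ⟨i, hbi, hy1, hx1⟩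
    · exact Or.inl hy1
    · exfalso
      rcases hx with h1 | ⟨j, hj⟩ | ⟨j, _, hj⟩ <;>
        [omega; (rw [hj] at hx1; have := j.isLt; have := i.isLt; omega);
         (rw [hj] at hx1; have := j.isLt; have := i.isLt; omega)]
    · exact Or.inr (Or.inl ⟨i, hy1⟩)
    · exfalso
      rcases hx with h1 | ⟨j, hj⟩ | ⟨j, _, hj⟩ <;>
        [omega; (rw [hj] at hx1; have := j.isLt; have := i.isLt; omega);
         (rw [hj] at hx1; have := j.isLt; have := i.isLt; omega)]

lemma disjS_walk (r : ℕ) (a b : Fin r → Bool)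
    (hdisj : ¬ ∃ i, a i = true ∧ b i = true) {x y : ℕ}
    (w : (disjGraph r a b).Walk x y) (hx : disjS r a x) : disjS r a y := by
  induction w with
  | nil => exact hx
  | cons h _ ih => exact ih (disjS_closed r a b hdisj h hx)

/-- Vertices `1` and `3r+2` are connected in `G(a,b)` if and only if
`DISJ(a,b) = 1`, i.e. there is some `i` with `a_i = b_i = 1`; moreover whenever
they are connected they are joined by a path of length `4`. -/
theorem disjGraph_connectivity_iff (r : ℕ) (hr : 1 ≤ r) (a b : Fin r → Bool) :
    ((disjGraph r a b).Reachable 1 (3 * r + 2) ↔ ∃ i, a i = true ∧ b i = true) ∧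
    ((disjGraph r a b).Reachable 1 (3 * r + 2) →
      ∃ p : (disjGraph r a b).Walk 1 (3 * r + 2), p.IsPath ∧ p.length = 4) := by
  have forward : (disjGraph r a b).Reachable 1 (3 * r + 2) →
      ∃ i, a i = true ∧ b i = true := by
    intro h
    by_contra hdisj
    obtain ⟨w⟩ := h
    have hS := disjS_walk r a b hdisj w (Or.inl rfl)
    rcases hS with h1 | ⟨j, hj⟩ | ⟨j, _, hj⟩
    · omega
    · have := j.isLt; omega
    · have := j.isLt; omega
  have path : (∃ i, a i = true ∧ b i = true) →
      ∃ p : (disjGraph r a b).Walk 1 (3 * r + 2), p.IsPath ∧ p.length = 4 := by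
    rintro ⟨i, hai, hbi⟩
    have hi := i.isLt
    have e1 : (disjGraph r a b).Adj 1 ((i : ℕ) + 2) := by
      rw [disjGraph, SimpleGraph.fromRel_adj]
      exact ⟨by omega, Or.inl (Or.inl ⟨i, rfl, rfl⟩)⟩
    have e2 : (disjGraph r a b).Adj ((i : ℕ) + 2) ((i : ℕ) + r + 2) := by
      rw [disjGraph, SimpleGraph.fromRel_adj]
      exact ⟨by omega, Or.inl (Or.inr (Or.inr (Or.inl ⟨i, hai, rfl, rfl⟩)))⟩
    have e3 : (disjGraph r a b).Adj ((i : ℕ) + r + 2) ((i : ℕ) + 2 * r + 2) := by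
      rw [disjGraph, SimpleGraph.fromRel_adj]
      exact ⟨by omega, Or.inl (Or.inr (Or.inr (Or.inr ⟨i, hbi, rfl, rfl⟩)))⟩
    have e4 : (disjGraph r a b).Adj ((i : ℕ) + 2 * r + 2) (3 * r + 2) := by
      rw [disjGraph, SimpleGraph.fromRel_adj]
      exact ⟨by omega, Or.inr (Or.inr (Or.inl ⟨i, rfl, rfl⟩))⟩
    refine ⟨SimpleGraph.Walk.cons e1 (SimpleGraph.Walk.cons e2
      (SimpleGraph.Walk.cons e3 (SimpleGraph.Walk.cons e4 SimpleGraph.Walk.nil))), ?_, rfl⟩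
    rw [SimpleGraph.Walk.isPath_def]
    simp [SimpleGraph.Walk.support, List.nodup_cons]
    omega
  refine ⟨⟨forward, fun h => ?_⟩, fun h => path (forward h)⟩
  obtain ⟨p, _, _⟩ := path h
  exact ⟨p⟩
end

section
/- Let G' be obtained from the constant-diameter disjointness graph G(a,b) by adding the edge {1, 3r+2}. Then G' contains a cycle (of length ≥ 3) if and only if DISJ(a,b) = 1. -/
/-- The graph `G'` obtained from the disjointness graph `G(a,b)` by adding the
extra edge `{1, 3r+2}`. -/
def disjCycleGraph (r : ℕ) (a b : Fin r → Bool) : SimpleGraph ℕ :=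
  SimpleGraph.fromRel (fun x y => disjRel r a b x y ∨ (x = 1 ∧ y = 3 * r + 2))

/-!
A vertex of a cycle has two distinct neighbours on the cycle. Suppose no `i` has
`a i = b i = true`. Then every middle vertex `B_i` has at most one neighbour, so it lies on no
cycle; after removing the `B_i`, each `A_i` and `C_i` keeps only one neighbour (`1`, resp.
`3r+2`), and the two remaining vertices `1` and `3r+2` cannot carry a cycle. Conversely, if
`a i = b i = true` then `1, A_i, B_i, C_i, 3r+2` is a `5`-cycle.
-/

open SimpleGraph Walk

lemma SimpleGraph.Walk.IsCycle.exists_adj_ne_of_mem_support {V : Type*} [DecidableEq V]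
    {G : SimpleGraph V} {x v : V} {c : G.Walk x x} (hc : c.IsCycle) (hv : v ∈ c.support) :
    ∃ u w, u ≠ w ∧ u ∈ c.support ∧ w ∈ c.support ∧ G.Adj v u ∧ G.Adj v w := by
  have hc' := hc.rotate hv
  refine ⟨_, _, hc'.snd_ne_penultimate, ?_, ?_, adj_snd hc'.not_nil,
    (adj_penultimate hc'.not_nil).symm⟩ <;>
    exact (mem_support_rotate_iff c v hv).1 (getVert_mem_support _ _)

namespace disjCycleGraph

/- The vertices of the graph are `1`, `A_i = i + 2`, `B_i = i + r + 2`, `C_i = i + 2r + 2`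
and `3r + 2`. -/

variable {r : ℕ} {a b : Fin r → Bool}

lemma adj_of_disjRel {x y : ℕ} (hxy : x ≠ y) (h : disjRel r a b x y) :
    (disjCycleGraph r a b).Adj x y :=
  (fromRel_adj ..).2 ⟨hxy, .inl (.inl h)⟩

lemma adj_one_three_mul_add_two : (disjCycleGraph r a b).Adj 1 (3 * r + 2) :=
  (fromRel_adj ..).2 ⟨by omega, .inl (.inr ⟨rfl, rfl⟩)⟩

lemma adj_A {i : Fin r} {u : ℕ} (h : (disjCycleGraph r a b).Adj ((i : ℕ) + 2) u) :
    u = 1 ∨ u = (i : ℕ) + r + 2 := by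
  have := i.isLt
  obtain ⟨-, ((⟨j, h₁, h₂⟩ | ⟨j, h₁, h₂⟩ | ⟨j, -, h₁, h₂⟩ | ⟨j, -, h₁, h₂⟩) | ⟨h₁, h₂⟩) |
    ((⟨j, h₁, h₂⟩ | ⟨j, h₁, h₂⟩ | ⟨j, -, h₁, h₂⟩ | ⟨j, -, h₁, h₂⟩) | ⟨h₁, h₂⟩)⟩ :=
    (fromRel_adj ..).1 h <;> omega

lemma adj_B {i : Fin r} {u : ℕ} (h : (disjCycleGraph r a b).Adj ((i : ℕ) + r + 2) u) :
    (a i = true ∧ u = (i : ℕ) + 2) ∨ (b i = true ∧ u = (i : ℕ) + 2 * r + 2) := by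
  have := i.isLt
  obtain ⟨-, ((⟨j, h₁, h₂⟩ | ⟨j, h₁, h₂⟩ | ⟨j, hj, h₁, h₂⟩ | ⟨j, hj, h₁, h₂⟩) | ⟨h₁, h₂⟩) |
    ((⟨j, h₁, h₂⟩ | ⟨j, h₁, h₂⟩ | ⟨j, hj, h₁, h₂⟩ | ⟨j, hj, h₁, h₂⟩) | ⟨h₁, h₂⟩)⟩ :=
    (fromRel_adj ..).1 h
  all_goals first
    | omega
    | obtain rfl : j = i := Fin.ext (by omega)
      first | exact .inl ⟨hj, by omega⟩ | exact .inr ⟨hj, by omega⟩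

lemma adj_C {i : Fin r} {u : ℕ} (h : (disjCycleGraph r a b).Adj ((i : ℕ) + 2 * r + 2) u) :
    u = 3 * r + 2 ∨ u = (i : ℕ) + r + 2 := by
  have := i.isLt
  obtain ⟨-, ((⟨j, h₁, h₂⟩ | ⟨j, h₁, h₂⟩ | ⟨j, -, h₁, h₂⟩ | ⟨j, -, h₁, h₂⟩) | ⟨h₁, h₂⟩) |
    ((⟨j, h₁, h₂⟩ | ⟨j, h₁, h₂⟩ | ⟨j, -, h₁, h₂⟩ | ⟨j, -, h₁, h₂⟩) | ⟨h₁, h₂⟩)⟩ :=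
    (fromRel_adj ..).1 h <;> omega

lemma vertex_cases_of_adj {x y : ℕ} (h : (disjCycleGraph r a b).Adj x y) :
    x = 1 ∨ x = 3 * r + 2 ∨ (∃ i : Fin r, x = (i : ℕ) + 2) ∨
      (∃ i : Fin r, x = (i : ℕ) + r + 2) ∨ (∃ i : Fin r, x = (i : ℕ) + 2 * r + 2) := by
  obtain ⟨-, ((⟨j, h₁, -⟩ | ⟨j, h₁, -⟩ | ⟨j, -, h₁, -⟩ | ⟨j, -, h₁, -⟩) | ⟨h₁, -⟩) |
    ((⟨j, -, h₁⟩ | ⟨j, -, h₁⟩ | ⟨j, -, -, h₁⟩ | ⟨j, -, -, h₁⟩) | ⟨-, h₁⟩)⟩ :=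
    (fromRel_adj ..).1 h
  all_goals subst h₁; simp

lemma notMem_of_forall_exists_two_adj (hD : ¬∃ i, a i = true ∧ b i = true) {S : Set ℕ}
    (hS : ∀ v ∈ S, ∃ u w, u ≠ w ∧ u ∈ S ∧ w ∈ S ∧
      (disjCycleGraph r a b).Adj v u ∧ (disjCycleGraph r a b).Adj v w)
    (v : ℕ) : v ∉ S := by
  have hB (i : Fin r) : (i : ℕ) + r + 2 ∉ S := fun hv ↦ by
    obtain ⟨u, w, huw, -, -, hu, hw⟩ := hS _ hv
    rcases adj_B hu with ⟨ha, rfl⟩ | ⟨hb, rfl⟩ <;> rcases adj_B hw with ⟨ha', h⟩ | ⟨hb', h⟩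
    exacts [huw h.symm, hD ⟨i, ha, hb'⟩, hD ⟨i, ha', hb⟩, huw h.symm]
  have hA (i : Fin r) : (i : ℕ) + 2 ∉ S := fun hv ↦ by
    obtain ⟨u, w, huw, hu, hw, hvu, hvw⟩ := hS _ hv
    rcases adj_A hvu with rfl | rfl <;> rcases adj_A hvw with rfl | rfl
    exacts [huw rfl, hB i hw, hB i hu, hB i hu]
  have hC (i : Fin r) : (i : ℕ) + 2 * r + 2 ∉ S := fun hv ↦ by
    obtain ⟨u, w, huw, hu, hw, hvu, hvw⟩ := hS _ hv
    rcases adj_C hvu with rfl | rfl <;> rcases adj_C hvw with rfl | rfl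
    exacts [huw rfl, hB i hw, hB i hu, hB i hu]
  have h_end {x y : ℕ} (hx : x ∈ S) (hxy : (disjCycleGraph r a b).Adj x y) :
      x = 1 ∨ x = 3 * r + 2 := by
    rcases vertex_cases_of_adj hxy with h | h | ⟨i, rfl⟩ | ⟨i, rfl⟩ | ⟨i, rfl⟩
    exacts [.inl h, .inr h, (hA i hx).elim, (hB i hx).elim, (hC i hx).elim]
  intro hv
  obtain ⟨u, w, huw, hu, hw, hvu, hvw⟩ := hS v hv
  have := h_end hv hvu
  have := h_end hu hvu.symm
  have := h_end hw hvw.symm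
  have := hvu.ne
  have := hvw.ne
  -- `v`, `u`, `w` all lie in `{1, 3r+2}`, but `u ≠ w` and both differ from `v`.
  omega

end disjCycleGraph

open disjCycleGraph in
theorem disjCycleGraph_cycle_iff_general (r : ℕ) (a b : Fin r → Bool) :
    (∃ (x : ℕ) (c : (disjCycleGraph r a b).Walk x x), c.IsCycle) ↔
      ∃ i, a i = true ∧ b i = true := by
  constructor
  · rintro ⟨x, c, hc⟩
    by_contra hD
    exact notMem_of_forall_exists_two_adj hD (S := {v | v ∈ c.support})
      (fun _ hv ↦ hc.exists_adj_ne_of_mem_support hv) x c.start_mem_support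
  · rintro ⟨i, hai, hbi⟩
    have := i.isLt
    let c : (disjCycleGraph r a b).Walk 1 1 :=
      .cons (adj_of_disjRel (by omega) (.inl ⟨i, rfl, rfl⟩)) <|
      .cons (adj_of_disjRel (by omega) (.inr <| .inr <| .inl ⟨i, hai, rfl, rfl⟩)) <|
      .cons (adj_of_disjRel (by omega) (.inr <| .inr <| .inr ⟨i, hbi, rfl, rfl⟩)) <|
      .cons ((adj_of_disjRel (by omega) (.inr <| .inl ⟨i, rfl, rfl⟩)).symm) <|
      .cons adj_one_three_mul_add_two.symm .nil
    exact ⟨1, c, by simp [c, cons_isCycle_iff]; omega⟩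

/-- `G'` contains a cycle (necessarily of length `≥ 3`) if and only if
`DISJ(a,b) = 1`, i.e. there is some `i` with `a_i = b_i = 1`. -/
theorem disjCycleGraph_cycle_iff (r : ℕ) (hr : 1 ≤ r) (a b : Fin r → Bool) :
    (∃ (x : ℕ) (c : (disjCycleGraph r a b).Walk x x), c.IsCycle) ↔
      ∃ i, a i = true ∧ b i = true :=
  disjCycleGraph_cycle_iff_general r a b
end

section
/- Let G'' be obtained from the constant-diameter disjointness graph G(a,b) by appending a disjoint path of 5 new vertices connecting vertex 1 to vertex 3r+2 (a path of length 5). Then the shortest-path distance between 1 and 3r+2 in G'' equals 4 if DISJ(a,b) = 1 and equals 5 otherwise. -/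
/-- The graph `G''` obtained from `G(a,b)` by appending a disjoint path of
length `5` from vertex `1` to vertex `3r+2`, through the four fresh internal
vertices `3r+3, 3r+4, 3r+5, 3r+6`. -/
def disjPathGraph (r : ℕ) (a b : Fin r → Bool) : SimpleGraph ℕ :=
  SimpleGraph.fromRel (fun x y => disjRel r a b x y ∨
    (x = 1 ∧ y = 3 * r + 3) ∨ (x = 3 * r + 3 ∧ y = 3 * r + 4) ∨
    (x = 3 * r + 4 ∧ y = 3 * r + 5) ∨ (x = 3 * r + 5 ∧ y = 3 * r + 6) ∨
    (x = 3 * r + 6 ∧ y = 3 * r + 2))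

open scoped Classical in
/-- Potential function for the lower bound `dist ≥ 5` in the disjoint case. -/
noncomputable def disjPot (r : ℕ) (a : Fin r → Bool) (v : ℕ) : ℕ :=
  if v ≤ 1 then 0
  else if 2 ≤ v ∧ v ≤ r + 1 then 1
  else if ∃ i : Fin r, v = (i : ℕ) + r + 2 ∧ a i = true then 2
  else if r + 2 ≤ v ∧ v ≤ 2 * r + 1 then 3
  else if 2 * r + 2 ≤ v ∧ v ≤ 3 * r + 1 then 4
  else if v = 3 * r + 2 then 5
  else if v = 3 * r + 3 then 1
  else if v = 3 * r + 4 then 2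
  else if v = 3 * r + 5 then 3
  else 4

/-- Potential function for the lower bound `dist ≥ 4`. -/
def levelPot (r : ℕ) (v : ℕ) : ℕ :=
  if v ≤ 1 then 0
  else if v ≤ r + 1 then 1
  else if v ≤ 2 * r + 1 then 2
  else if v ≤ 3 * r + 1 then 3
  else if v = 3 * r + 2 then 4
  else if v = 3 * r + 3 then 1
  else if v = 3 * r + 4 then 2
  else 3

lemma walk_pot_bound {G : SimpleGraph ℕ} (f : ℕ → ℕ)
    (hf : ∀ ⦃x y : ℕ⦄, G.Adj x y → f y ≤ f x + 1) :
    ∀ {u v : ℕ} (p : G.Walk u v), f v ≤ f u + p.length := by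
  intro u v p
  induction p with
  | nil => simp
  | cons h p ih =>
    have := hf h
    simp only [SimpleGraph.Walk.length_cons]
    omega

section potvals

variable {r : ℕ} {a : Fin r → Bool}

lemma disjPot_one : disjPot r a 1 = 0 := by unfold disjPot; simp

lemma disjPot_A (i : Fin r) : disjPot r a ((i : ℕ) + 2) = 1 := by
  have hlt := i.is_lt
  unfold disjPot
  rw [if_neg (by omega), if_pos (by omega)]

lemma disjPot_M_true (i : Fin r) (h : a i = true) :
    disjPot r a ((i : ℕ) + r + 2) = 2 := by
  unfold disjPot
  rw [if_neg (by omega), if_neg (by omega), if_pos ⟨i, rfl, h⟩]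

lemma disjPot_M_false (i : Fin r) (h : ¬ a i = true) :
    disjPot r a ((i : ℕ) + r + 2) = 3 := by
  have hlt := i.is_lt
  unfold disjPot
  rw [if_neg (by omega), if_neg (by omega), if_neg, if_pos (by omega)]
  rintro ⟨j, hj, haj⟩
  have : j = i := Fin.ext (by omega)
  exact h (this ▸ haj)

lemma disjPot_B (i : Fin r) : disjPot r a ((i : ℕ) + 2 * r + 2) = 4 := by
  have hlt := i.is_lt
  unfold disjPot
  rw [if_neg (by omega), if_neg (by omega), if_neg, if_neg (by omega),
    if_pos (by omega)]
  rintro ⟨j, hj, -⟩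
  have := j.is_lt
  omega

lemma disjPot_S : disjPot r a (3 * r + 2) = 5 := by
  unfold disjPot
  rw [if_neg (by omega), if_neg (by omega), if_neg, if_neg (by omega),
    if_neg (by omega), if_pos rfl]
  rintro ⟨j, hj, -⟩
  have := j.is_lt
  omega

lemma disjPot_P (k : ℕ) (hk3 : k = 3 ∨ k = 4 ∨ k = 5 ∨ k = 6) :
    disjPot r a (3 * r + k) = k - 2 := by
  unfold disjPot
  rw [if_neg (by omega), if_neg (by omega), if_neg, if_neg (by omega),
    if_neg (by omega), if_neg (by omega)]
  · rcases hk3 with h | h | h | h <;> subst h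
    · rw [if_pos rfl]
    · rw [if_neg (by omega), if_pos rfl]
    · rw [if_neg (by omega), if_neg (by omega), if_pos rfl]
    · rw [if_neg (by omega), if_neg (by omega), if_neg (by omega)]
  · rintro ⟨j, hj, -⟩
    have := j.is_lt
    omega

lemma levelPot_val {r : ℕ} {v k : ℕ}
    (h : (v = 1 ∧ k = 0) ∨ (2 ≤ v ∧ v ≤ r + 1 ∧ k = 1) ∨
      (r + 2 ≤ v ∧ v ≤ 2 * r + 1 ∧ k = 2) ∨ (2 * r + 2 ≤ v ∧ v ≤ 3 * r + 1 ∧ k = 3) ∨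
      (v = 3 * r + 2 ∧ k = 4) ∨ (v = 3 * r + 3 ∧ k = 1) ∨ (v = 3 * r + 4 ∧ k = 2) ∨
      (v = 3 * r + 5 ∧ k = 3) ∨ (v = 3 * r + 6 ∧ k = 3)) :
    levelPot r v = k := by
  unfold levelPot
  split_ifs <;> omega

end potvals

/-- The shortest-path distance between `1` and `3r+2` in `G''` equals `4` if
`DISJ(a,b) = 1` and equals `5` otherwise. -/
theorem disjPathGraph_dist (r : ℕ) (hr : 1 ≤ r) (a b : Fin r → Bool) :
    ((∃ i, a i = true ∧ b i = true) →
      (disjPathGraph r a b).dist 1 (3 * r + 2) = 4) ∧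
    (¬ (∃ i, a i = true ∧ b i = true) →
      (disjPathGraph r a b).dist 1 (3 * r + 2) = 5) := by
  classical
  set G := disjPathGraph r a b with hG
  have adj_of : ∀ x y : ℕ, x ≠ y →
      (disjRel r a b x y ∨ (x = 1 ∧ y = 3 * r + 3) ∨ (x = 3 * r + 3 ∧ y = 3 * r + 4) ∨
       (x = 3 * r + 4 ∧ y = 3 * r + 5) ∨ (x = 3 * r + 5 ∧ y = 3 * r + 6) ∨
       (x = 3 * r + 6 ∧ y = 3 * r + 2)) → G.Adj x y := by
    intro x y hne h
    rw [hG, disjPathGraph, SimpleGraph.fromRel_adj]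
    exact ⟨hne, Or.inl h⟩
  -- the appended path gives a walk of length 5
  have e1 : G.Adj 1 (3 * r + 3) := adj_of _ _ (by omega) (by tauto)
  have e2 : G.Adj (3 * r + 3) (3 * r + 4) := adj_of _ _ (by omega) (by tauto)
  have e3 : G.Adj (3 * r + 4) (3 * r + 5) := adj_of _ _ (by omega) (by tauto)
  have e4 : G.Adj (3 * r + 5) (3 * r + 6) := adj_of _ _ (by omega) (by tauto)
  have e5 : G.Adj (3 * r + 6) (3 * r + 2) := adj_of _ _ (by omega) (by tauto)
  have hreach : G.Reachable 1 (3 * r + 2) :=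
    ⟨.cons e1 (.cons e2 (.cons e3 (.cons e4 (.cons e5 .nil))))⟩
  have hd5 : G.dist 1 (3 * r + 2) ≤ 5 := by
    have := SimpleGraph.dist_le (.cons e1 (.cons e2 (.cons e3 (.cons e4 (.cons e5 .nil)))))
    simpa using this
  obtain ⟨p, hp⟩ := hreach.exists_walk_length_eq_dist
  -- lower bound 4, via levelPot
  have hlip4 : ∀ ⦃x y : ℕ⦄, G.Adj x y → levelPot r y ≤ levelPot r x + 1 := by
    intro x y hxy
    rw [hG, disjPathGraph, SimpleGraph.fromRel_adj] at hxy
    have key : ∀ x y : ℕ,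
        (disjRel r a b x y ∨ (x = 1 ∧ y = 3 * r + 3) ∨ (x = 3 * r + 3 ∧ y = 3 * r + 4) ∨
         (x = 3 * r + 4 ∧ y = 3 * r + 5) ∨ (x = 3 * r + 5 ∧ y = 3 * r + 6) ∨
         (x = 3 * r + 6 ∧ y = 3 * r + 2)) →
        levelPot r y ≤ levelPot r x + 1 ∧ levelPot r x ≤ levelPot r y + 1 := by
      intro x y h
      rcases h with (⟨i, h1, h2⟩ | ⟨i, h1, h2⟩ | ⟨i, -, h1, h2⟩ | ⟨i, -, h1, h2⟩) |
        ⟨h1, h2⟩ | ⟨h1, h2⟩ | ⟨h1, h2⟩ | ⟨h1, h2⟩ | ⟨h1, h2⟩ <;> subst h1 <;> subst h2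
      · have hi := i.is_lt
        rw [levelPot_val (v := 1) (k := 0) (by omega),
          levelPot_val (v := (i : ℕ) + 2) (k := 1) (by omega)]; omega
      · have hi := i.is_lt
        rw [levelPot_val (v := 3 * r + 2) (k := 4) (by omega),
          levelPot_val (v := (i : ℕ) + 2 * r + 2) (k := 3) (by omega)]; omega
      · have hi := i.is_lt
        rw [levelPot_val (v := (i : ℕ) + 2) (k := 1) (by omega),
          levelPot_val (v := (i : ℕ) + r + 2) (k := 2) (by omega)]; omega
      · have hi := i.is_lt
        rw [levelPot_val (v := (i : ℕ) + r + 2) (k := 2) (by omega),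
          levelPot_val (v := (i : ℕ) + 2 * r + 2) (k := 3) (by omega)]; omega
      · rw [levelPot_val (v := 1) (k := 0) (by omega),
          levelPot_val (v := 3 * r + 3) (k := 1) (by omega)]; omega
      · rw [levelPot_val (v := 3 * r + 3) (k := 1) (by omega),
          levelPot_val (v := 3 * r + 4) (k := 2) (by omega)]; omega
      · rw [levelPot_val (v := 3 * r + 4) (k := 2) (by omega),
          levelPot_val (v := 3 * r + 5) (k := 3) (by omega)]; omega
      · rw [levelPot_val (v := 3 * r + 5) (k := 3) (by omega),
          levelPot_val (v := 3 * r + 6) (k := 3) (by omega)]; omega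
      · rw [levelPot_val (v := 3 * r + 6) (k := 3) (by omega),
          levelPot_val (v := 3 * r + 2) (k := 4) (by omega)]; omega
    obtain ⟨hne, h | h⟩ := hxy
    · exact (key x y h).1
    · exact (key y x h).2
  have hlev1 : levelPot r 1 = 0 := levelPot_val (v := 1) (by omega)
  have hlevS : levelPot r (3 * r + 2) = 4 := levelPot_val (v := 3 * r + 2) (by omega)
  have hd4 : 4 ≤ G.dist 1 (3 * r + 2) := by
    have := walk_pot_bound (levelPot r) hlip4 p
    rw [hlev1, hlevS, hp] at this
    omega
  constructor
  · -- intersecting case: a walk of length 4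
    rintro ⟨i, hai, hbi⟩
    have hlt := i.is_lt
    have a1 : G.Adj 1 ((i : ℕ) + 2) := adj_of _ _ (by omega)
      (Or.inl (Or.inl ⟨i, rfl, rfl⟩))
    have a2 : G.Adj ((i : ℕ) + 2) ((i : ℕ) + r + 2) := adj_of _ _ (by omega)
      (Or.inl (Or.inr (Or.inr (Or.inl ⟨i, hai, rfl, rfl⟩))))
    have a3 : G.Adj ((i : ℕ) + r + 2) ((i : ℕ) + 2 * r + 2) := adj_of _ _ (by omega)
      (Or.inl (Or.inr (Or.inr (Or.inr ⟨i, hbi, rfl, rfl⟩))))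
    have a4 : G.Adj ((i : ℕ) + 2 * r + 2) (3 * r + 2) :=
      (adj_of (3 * r + 2) ((i : ℕ) + 2 * r + 2) (by omega)
        (Or.inl (Or.inr (Or.inl ⟨i, rfl, rfl⟩)))).symm
    let p4 : G.Walk 1 (3 * r + 2) :=
      .cons a1 (.cons a2 (.cons a3 (.cons a4 .nil)))
    have hle : G.dist 1 (3 * r + 2) ≤ 4 := SimpleGraph.dist_le p4
    omega
  · -- disjoint case: lower bound 5 via disjPot
    intro hdisj
    have hlip5 : ∀ ⦃x y : ℕ⦄, G.Adj x y → disjPot r a y ≤ disjPot r a x + 1 := by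
      have key : ∀ x y : ℕ,
          (disjRel r a b x y ∨ (x = 1 ∧ y = 3 * r + 3) ∨ (x = 3 * r + 3 ∧ y = 3 * r + 4) ∨
           (x = 3 * r + 4 ∧ y = 3 * r + 5) ∨ (x = 3 * r + 5 ∧ y = 3 * r + 6) ∨
           (x = 3 * r + 6 ∧ y = 3 * r + 2)) →
          disjPot r a y ≤ disjPot r a x + 1 ∧ disjPot r a x ≤ disjPot r a y + 1 := by
        intro x y h
        rcases h with (⟨i, h1, h2⟩ | ⟨i, h1, h2⟩ | ⟨i, hai, h1, h2⟩ | ⟨i, hbi, h1, h2⟩) |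
          ⟨h1, h2⟩ | ⟨h1, h2⟩ | ⟨h1, h2⟩ | ⟨h1, h2⟩ | ⟨h1, h2⟩ <;> subst h1 <;> subst h2
        · rw [disjPot_one, disjPot_A i]; omega
        · rw [disjPot_S, disjPot_B i]; omega
        · rw [disjPot_A i, disjPot_M_true i hai]; omega
        · have haf : ¬ a i = true := fun h => hdisj ⟨i, h, hbi⟩
          rw [disjPot_M_false i haf, disjPot_B i]; omega
        · rw [disjPot_one, disjPot_P 3 (by tauto)]; omega
        · rw [disjPot_P 3 (by tauto), disjPot_P 4 (by tauto)]; omega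
        · rw [disjPot_P 4 (by tauto), disjPot_P 5 (by tauto)]; omega
        · rw [disjPot_P 5 (by tauto), disjPot_P 6 (by tauto)]; omega
        · rw [disjPot_P 6 (by tauto), disjPot_S]; omega
      intro x y hxy
      rw [hG, disjPathGraph, SimpleGraph.fromRel_adj] at hxy
      obtain ⟨hne, h | h⟩ := hxy
      · exact (key x y h).1
      · exact (key y x h).2
    have := walk_pot_bound (disjPot r a) hlip5 p
    rw [disjPot_one, disjPot_S, hp] at this
    omega
end
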